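/- For all integers r ≥ s ≥ 1, the group homomorphisms Sp_{2n}(O) → Sp_{2n}(O/ϖ^r O) and Sp_{2n}(O/ϖ^r O) → Sp_{2n}(O/ϖ^s O) induced by the canonical quotient maps of rings are surjective. -/

import Mathlib

open Matrix

/-- The matrix `J = [[0, I'ₙ],[−I'ₙ, 0]]` where `I'ₙ` is the antidiagonal identity. -/
def Jmat (R : Type*) [CommRing R] (n : ℕ) : Matrix (Fin (2*n)) (Fin (2*n)) R :=
  Matrix.of fun i j =>
    if (i : ℕ) + (j : ℕ) = 2*n - 1 then (if (i : ℕ) < n then (1 : R) else -1) else 0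

/-- The symplectic group `Sp_{2n}(R)` as a set of matrices. -/
def SpSet (n : ℕ) (R : Type*) [CommRing R] : Set (Matrix (Fin (2*n)) (Fin (2*n)) R) :=
  {g | IsUnit g.det ∧ g * Jmat R n * gᵀ = Jmat R n}

/-- The symplectic Lie algebra `sp_{2n}(R)` as a set of matrices. -/
def spSet (n : ℕ) (R : Type*) [CommRing R] : Set (Matrix (Fin (2*n)) (Fin (2*n)) R) :=
  {X | X * Jmat R n + Jmat R n * Xᵀ = 0}

/-!
As the residue ring has odd order and `ϖ` lies in the Jacobson radical of the complete ring `O`,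
`2` is a unit in `O`. If `g J gᵀ = J + E` with `E ≡ 0 mod 𝔞`, then `E` is skew, so
`g' = (1 + ½ E J) g` satisfies `g' ≡ g mod 𝔞` and `g' J g'ᵀ ≡ J mod 𝔞²`.
Starting from an arbitrary lift of a symplectic matrix modulo `ϖᵏ` and applying this correction
with `𝔞 = (ϖ)ʲ` for `j = k, k + 1, …` gives a `ϖ`-adically convergent sequence whose limit is
symplectic and reduces to the given matrix. Surjectivity of `Sp_{2n}(O/ϖʳ) → Sp_{2n}(O/ϖˢ)`
follows by lifting all the way to `O` and reducing back down.
-/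

namespace Ideal

variable {R : Type*} [CommRing R] {m : Type*} [Fintype m] [DecidableEq m] {I : Ideal R}

theorem transpose_mem_matrix_iff {A : Matrix m m R} : Aᵀ ∈ I.matrix m ↔ A ∈ I.matrix m := by
  simp only [mem_matrix, transpose_apply]
  exact forall_comm

theorem mul_mem_matrix_mul {J : Ideal R} {A B : Matrix m m R} (hA : A ∈ I.matrix m)
    (hB : B ∈ J.matrix m) : A * B ∈ (I * J).matrix m := fun _ _ =>
  _root_.sum_mem fun k _ => mul_mem_mul (hA _ k) (hB k _)

theorem mul_mem_matrix_right {A : Matrix m m R} (B : Matrix m m R) (hA : A ∈ I.matrix m) :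
    A * B ∈ I.matrix m := by
  simpa using mul_mem_matrix_mul hA (J := ⊤) (B := B) fun _ _ => Submodule.mem_top

theorem map_mk_eq_map_mk_iff {A B : Matrix m m R} :
    A.map (Quotient.mk I) = B.map (Quotient.mk I) ↔ A - B ∈ I.matrix m := by
  simp only [← Matrix.ext_iff, map_apply, Quotient.eq, mem_matrix, Matrix.sub_apply]

variable (I)

theorem sub_mem_matrix_pow_add {u : ℕ → Matrix m m R} {k : ℕ}
    (hu : ∀ j, u (j + 1) - u j ∈ (I ^ (k + j)).matrix m) (j t : ℕ) :
    u (j + t) - u j ∈ (I ^ (k + j)).matrix m := by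
  induction t with
  | zero => simp
  | succ t ih =>
    have hlast := matrix_monotone m (pow_le_pow_right (by omega : k + j ≤ k + (j + t))) (hu (j + t))
    simpa [← add_assoc] using add_mem hlast ih

theorem exists_sub_mem_matrix_pow [IsPrecomplete I R] {u : ℕ → Matrix m m R}
    (hu : ∀ j, u (j + 1) - u j ∈ (I ^ j).matrix m) :
    ∃ L, ∀ j, u j - L ∈ (I ^ j).matrix m := by
  have hcauchy := sub_mem_matrix_pow_add I (k := 0) (by simpa using hu)
  have hlim (a b : m) : ∃ L, ∀ j, u j a b ≡ L [SMOD (I ^ j • ⊤ : Submodule R R)] := by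
    refine IsPrecomplete.prec inferInstance fun {i j} hij => ?_
    obtain ⟨t, rfl⟩ := Nat.exists_eq_add_of_le hij
    rw [SModEq.sub_mem, smul_eq_mul, mul_top, ← neg_mem_iff, neg_sub]
    simpa using hcauchy i t a b
  choose L hL using hlim
  refine ⟨Matrix.of L, fun j a b => ?_⟩
  simpa [SModEq.sub_mem] using hL a b j

theorem eq_of_forall_sub_mem_matrix_pow [IsHausdorff I R] {A B : Matrix m m R}
    (h : ∀ j, A - B ∈ (I ^ j).matrix m) : A = B := by
  ext a b
  rw [IsHausdorff.eq_iff_smodEq (I := I)]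
  intro j
  simpa [SModEq.sub_mem] using h j a b

theorem exists_eq_zero_of_forall_lift [IsAdicComplete I R] {F : Matrix m m R → Matrix m m R}
    (hF : ∀ j A B, A - B ∈ (I ^ j).matrix m → F A - F B ∈ (I ^ j).matrix m) {k : ℕ}
    (hlift : ∀ j, k ≤ j → ∀ A, F A ∈ (I ^ j).matrix m →
      ∃ A', A' - A ∈ (I ^ j).matrix m ∧ F A' ∈ (I ^ (j + 1)).matrix m)
    {A₀ : Matrix m m R} (hA₀ : F A₀ ∈ (I ^ k).matrix m) :
    ∃ A, F A = 0 ∧ A - A₀ ∈ (I ^ k).matrix m := by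
  have hlift_total (j : ℕ) (A : Matrix m m R) : ∃ A', k ≤ j → F A ∈ (I ^ j).matrix m →
      A' - A ∈ (I ^ j).matrix m ∧ F A' ∈ (I ^ (j + 1)).matrix m := by
    by_cases h : k ≤ j ∧ F A ∈ (I ^ j).matrix m
    · obtain ⟨A', hA'⟩ := hlift j h.1 A h.2
      exact ⟨A', fun _ _ => hA'⟩
    · exact ⟨A, fun hj hA => absurd ⟨hj, hA⟩ h⟩
  choose T hT using hlift_total
  let u (j : ℕ) : Matrix m m R := Nat.rec A₀ (fun j A => T (k + j) A) j
  have hu (j : ℕ) : F (u j) ∈ (I ^ (k + j)).matrix m := by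
    induction j with
    | zero => exact hA₀
    | succ j ih => simpa [← add_assoc] using (hT (k + j) (u j) (by omega) ih).2
  have hstep (j : ℕ) : u (j + 1) - u j ∈ (I ^ (k + j)).matrix m :=
    (hT (k + j) (u j) (by omega) (hu j)).1
  have hmono (j : ℕ) : (I ^ (k + j)).matrix m ≤ (I ^ j).matrix m :=
    matrix_monotone m (pow_le_pow_right (by omega))
  obtain ⟨L, hL⟩ := exists_sub_mem_matrix_pow I fun j => hmono j (hstep j)
  have hLu (j : ℕ) : L - u j ∈ (I ^ j).matrix m := by
    simpa using neg_mem (hL j)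
  refine ⟨L, eq_of_forall_sub_mem_matrix_pow I fun j => ?_, ?_⟩
  · simpa using add_mem (hF j _ _ (hLu j)) (hmono j (hu j))
  · have h := add_mem (hLu k) (sub_mem_matrix_pow_add I hstep 0 k)
    rwa [zero_add, sub_add_sub_cancel] at h

end Ideal

section Symplectic

variable {R : Type*} [CommRing R] {m : Type*} [Fintype m] [DecidableEq m] {J : Matrix m m R}

theorem isUnit_det_of_mul_mul_transpose_eq (hJJ : J * J = -1) {g : Matrix m m R}
    (hg : g * J * gᵀ = J) : IsUnit g.det :=
  isUnit_det_of_right_inverse (B := J * gᵀ * -J) <| by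
    rw [← mul_assoc, ← mul_assoc, hg, mul_neg, hJJ, neg_neg]

theorem mul_mul_transpose_sub_mem_matrix {I : Ideal R} {A B : Matrix m m R}
    (h : A - B ∈ I.matrix m) : A * J * Aᵀ - B * J * Bᵀ ∈ I.matrix m := by
  have hsplit : A * J * Aᵀ - B * J * Bᵀ = (A - B) * (J * Aᵀ) + B * J * (A - B)ᵀ := by
    rw [transpose_sub]
    noncomm_ring
  rw [hsplit]
  exact add_mem (Ideal.mul_mem_matrix_right _ h)
    ((I.matrix m).mul_mem_left _ (Ideal.transpose_mem_matrix_iff.2 h))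

theorem exists_symplectic_refinement [Invertible (2 : R)] (hJt : Jᵀ = -J) (hJJ : J * J = -1)
    {I : Ideal R} {g : Matrix m m R} (hg : g * J * gᵀ - J ∈ I.matrix m) :
    ∃ g', g' - g ∈ I.matrix m ∧ g' * J * g'ᵀ - J ∈ (I * I).matrix m := by
  set E := g * J * gᵀ - J with hE
  have hEt : Eᵀ = -E := by
    simp only [hE, transpose_sub, transpose_mul, transpose_transpose, hJt]
    noncomm_ring
  set Z := E * ((⅟2 : R) • J)
  have hZ : Z ∈ I.matrix m := Ideal.mul_mem_matrix_right _ hg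
  have hZt : Zᵀ ∈ I.matrix m := Ideal.transpose_mem_matrix_iff.2 hZ
  have hlin : E + (Z * J + J * Zᵀ) = 0 := by
    simp only [Z, transpose_mul, transpose_smul, hJt, hEt, Matrix.mul_smul, Matrix.smul_mul,
      mul_neg, neg_mul, neg_neg, mul_assoc, hJJ, ← mul_assoc J J, mul_one, one_mul]
    rw [smul_neg, ← neg_add, ← add_smul, invOf_two_add_invOf_two, one_smul, add_neg_cancel]
  refine ⟨(1 + Z) * g, by simpa [add_mul] using Ideal.mul_mem_matrix_right g hZ, ?_⟩
  have hexpand : (1 + Z) * g * J * ((1 + Z) * g)ᵀ - J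
      = Z * (E + J * Zᵀ + E * Zᵀ) + E * Zᵀ + (E + (Z * J + J * Zᵀ)) := by
    have hgJg : g * J * gᵀ = J + E := by rw [hE]; abel
    rw [transpose_mul, transpose_add, transpose_one,
      show (1 + Z) * g * J * (gᵀ * (1 + Zᵀ)) = (1 + Z) * (g * J * gᵀ) * (1 + Zᵀ) by
        simp only [mul_assoc], hgJg]
    noncomm_ring
  rw [hexpand, hlin, add_zero]
  refine add_mem (Ideal.mul_mem_matrix_mul hZ (add_mem (add_mem hg ?_) ?_))
    (Ideal.mul_mem_matrix_mul hg hZt)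
  · exact (I.matrix m).mul_mem_left _ hZt
  · exact Ideal.mul_mem_matrix_right _ hg

end Symplectic

section Jmat

variable (R : Type*) [CommRing R] (n : ℕ)

theorem Jmat_apply (i j : Fin (2 * n)) :
    Jmat R n i j = if j = i.rev then (if (i : ℕ) < n then 1 else -1) else 0 := by
  have : (i : ℕ) + j = 2 * n - 1 ↔ j = i.rev := by rw [Fin.ext_iff, Fin.val_rev]; omega
  simp only [Jmat, of_apply, this]

theorem Jmat_transpose : (Jmat R n)ᵀ = -Jmat R n := by
  ext i j
  rw [transpose_apply, Matrix.neg_apply, Jmat_apply, Jmat_apply]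
  simp only [Fin.ext_iff, Fin.val_rev]
  split_ifs <;> first | omega | simp

theorem Jmat_mul_self : Jmat R n * Jmat R n = -1 := by
  ext i j
  simp only [mul_apply, Jmat_apply, ite_mul, zero_mul, Finset.sum_ite_eq', Finset.mem_univ,
    if_true, Fin.rev_rev, Matrix.neg_apply, one_apply, Fin.val_rev]
  split_ifs <;> first | omega | simp

variable {R} {S : Type*} [CommRing S]

theorem Jmat_map (f : R →+* S) : (Jmat R n).map f = Jmat S n := by
  ext i j
  simp [Jmat, apply_ite f]

theorem mul_Jmat_mul_transpose_map (f : R →+* S) (g : Matrix (Fin (2 * n)) (Fin (2 * n)) R) :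
    (g * Jmat R n * gᵀ).map f = g.map f * Jmat S n * (g.map f)ᵀ := by
  rw [Matrix.map_mul, Matrix.map_mul, Jmat_map, transpose_map]

theorem map_mem_SpSet (f : R →+* S) {g : Matrix (Fin (2 * n)) (Fin (2 * n)) R}
    (hg : g ∈ SpSet n R) : g.map f ∈ SpSet n S := by
  refine ⟨?_, ?_⟩
  · rw [← RingHom.mapMatrix_apply, ← RingHom.map_det]
    exact hg.1.map f
  · rw [← mul_Jmat_mul_transpose_map, hg.2, Jmat_map]

theorem exists_mem_SpSet_map_mk_eq (I : Ideal R) [IsAdicComplete I R] [Invertible (2 : R)]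
    {k : ℕ} (hk : 1 ≤ k) {gbar : Matrix (Fin (2 * n)) (Fin (2 * n)) (R ⧸ I ^ k)}
    (hgbar : gbar ∈ SpSet n (R ⧸ I ^ k)) :
    ∃ g ∈ SpSet n R, g.map (Ideal.Quotient.mk (I ^ k)) = gbar := by
  obtain ⟨g₀, rfl⟩ : ∃ g₀ : Matrix _ _ R, g₀.map (Ideal.Quotient.mk (I ^ k)) = gbar :=
    ⟨gbar.map fun x => (Ideal.Quotient.mk_surjective x).choose,
      by ext; simp [(Ideal.Quotient.mk_surjective _).choose_spec]⟩
  have hg₀ : g₀ * Jmat R n * g₀ᵀ - Jmat R n ∈ (I ^ k).matrix _ := by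
    rw [← Ideal.map_mk_eq_map_mk_iff, mul_Jmat_mul_transpose_map, Jmat_map, hgbar.2]
  obtain ⟨g, hFg, hgg₀⟩ := Ideal.exists_eq_zero_of_forall_lift I
    (F := fun g => g * Jmat R n * gᵀ - Jmat R n)
    (fun _ _ _ h => by simpa using mul_mul_transpose_sub_mem_matrix h)
    (fun j hj A hA => by
      obtain ⟨A', hA'A, hA'⟩ := exists_symplectic_refinement (Jmat_transpose R n)
        (Jmat_mul_self R n) hA
      refine ⟨A', hA'A, Ideal.matrix_monotone _ ?_ hA'⟩
      rw [← pow_add]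
      exact Ideal.pow_le_pow_right (by omega))
    hg₀
  have hgJ : g * Jmat R n * gᵀ = Jmat R n := sub_eq_zero.1 hFg
  exact ⟨g, ⟨isUnit_det_of_mul_mul_transpose_eq (Jmat_mul_self R n) hgJ, hgJ⟩,
    Ideal.map_mk_eq_map_mk_iff.2 hgg₀⟩

end Jmat

theorem isUnit_two_of_odd_natCard {A : Type*} [Ring A] (h : Odd (Nat.card A)) :
    IsUnit (2 : A) :=
  isUnit_two_iff_forall_even.2 fun a => by
    obtain ⟨k, hk⟩ := h
    refine ⟨(k + 1) • a, ?_⟩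
    rw [← add_nsmul, show k + 1 + (k + 1) = Nat.card A + 1 by omega, add_nsmul,
      card_nsmul_eq_zero', zero_add, one_nsmul]

theorem isUnit_two_of_odd_natCard_quotient {R : Type*} [CommRing R] (I : Ideal R)
    [IsAdicComplete I R] (h : Odd (Nat.card (R ⧸ I))) : IsUnit (2 : R) := by
  have := isLocalHom_of_le_jacobson_bot I (IsAdicComplete.le_jacobson_bot I)
  rw [← isUnit_map_iff (Ideal.Quotient.mk I), map_ofNat]
  exact isUnit_two_of_odd_natCard h

theorem stmt10_general (n : ℕ)
    (O : Type*) [CommRing O]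
    (ϖ : O) [IsAdicComplete (Ideal.span {ϖ}) O]
    (q : ℕ)
    (hq : Nat.card (O ⧸ Ideal.span {ϖ}) = q) (hodd : Odd q)
    (r s : ℕ) (hs : 1 ≤ s) (hrs : s ≤ r) :
    (∀ g ∈ SpSet n O,
      g.map (Ideal.Quotient.mk (Ideal.span {ϖ^r})) ∈ SpSet n (O ⧸ Ideal.span {ϖ^r})) ∧
    (∀ gbar ∈ SpSet n (O ⧸ Ideal.span {ϖ^r}),
      ∃ g ∈ SpSet n O, g.map (Ideal.Quotient.mk (Ideal.span {ϖ^r})) = gbar) ∧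
    (∀ g ∈ SpSet n (O ⧸ Ideal.span {ϖ^r}),
      g.map (Ideal.Quotient.factor (S := Ideal.span {ϖ^r}) (T := Ideal.span {ϖ^s})
          (Ideal.span_singleton_le_span_singleton.mpr (pow_dvd_pow ϖ hrs)))
        ∈ SpSet n (O ⧸ Ideal.span {ϖ^s})) ∧
    (∀ gbar ∈ SpSet n (O ⧸ Ideal.span {ϖ^s}),
      ∃ g ∈ SpSet n (O ⧸ Ideal.span {ϖ^r}),
        g.map (Ideal.Quotient.factor (S := Ideal.span {ϖ^r}) (T := Ideal.span {ϖ^s})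
          (Ideal.span_singleton_le_span_singleton.mpr (pow_dvd_pow ϖ hrs))) = gbar) := by
  have : Invertible (2 : O) :=
    (isUnit_two_of_odd_natCard_quotient _ (hq ▸ hodd)).invertible
  have hlift (t : ℕ) (ht : 1 ≤ t) : ∀ gbar ∈ SpSet n (O ⧸ Ideal.span {ϖ ^ t}),
      ∃ g ∈ SpSet n O, g.map (Ideal.Quotient.mk (Ideal.span {ϖ ^ t})) = gbar := by
    rw [← Ideal.span_singleton_pow]
    exact fun gbar => exists_mem_SpSet_map_mk_eq n _ ht
  refine ⟨fun g => map_mem_SpSet n _, hlift r (hs.trans hrs), fun g => map_mem_SpSet n _,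
    fun gbar hgbar => ?_⟩
  obtain ⟨g, hg, rfl⟩ := hlift s hs gbar hgbar
  exact ⟨g.map (Ideal.Quotient.mk _), map_mem_SpSet n _ hg, by rw [Matrix.map_map]; rfl⟩

/-- The reduction maps `Sp_{2n}(O) → Sp_{2n}(O/ϖ^r O)` and
`Sp_{2n}(O/ϖ^r O) → Sp_{2n}(O/ϖ^s O)` (for `r ≥ s ≥ 1`) are surjective. -/
theorem stmt10 (n : ℕ) (hn : 1 ≤ n)
    (O : Type*) [CommRing O] [IsDomain O] [IsDiscreteValuationRing O]
    (ϖ : O) (hϖ : Irreducible ϖ) [IsAdicComplete (Ideal.span {ϖ}) O]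
    [Finite (O ⧸ Ideal.span {ϖ})] (q : ℕ)
    (hq : Nat.card (O ⧸ Ideal.span {ϖ}) = q) (hodd : Odd q)
    (r s : ℕ) (hs : 1 ≤ s) (hrs : s ≤ r) :
    (∀ g ∈ SpSet n O,
      g.map (Ideal.Quotient.mk (Ideal.span {ϖ^r})) ∈ SpSet n (O ⧸ Ideal.span {ϖ^r})) ∧
    (∀ gbar ∈ SpSet n (O ⧸ Ideal.span {ϖ^r}),
      ∃ g ∈ SpSet n O, g.map (Ideal.Quotient.mk (Ideal.span {ϖ^r})) = gbar) ∧
    (∀ g ∈ SpSet n (O ⧸ Ideal.span {ϖ^r}),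
      g.map (Ideal.Quotient.factor (S := Ideal.span {ϖ^r}) (T := Ideal.span {ϖ^s})
          (Ideal.span_singleton_le_span_singleton.mpr (pow_dvd_pow ϖ hrs)))
        ∈ SpSet n (O ⧸ Ideal.span {ϖ^s})) ∧
    (∀ gbar ∈ SpSet n (O ⧸ Ideal.span {ϖ^s}),
      ∃ g ∈ SpSet n (O ⧸ Ideal.span {ϖ^r}),
        g.map (Ideal.Quotient.factor (S := Ideal.span {ϖ^r}) (T := Ideal.span {ϖ^s})
          (Ideal.span_singleton_le_span_singleton.mpr (pow_dvd_pow ϖ hrs))) = gbar) :=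
  stmt10_general n O ϖ q hq hodd r s hs hrs
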